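/- Let π_n : K₂ → K₂ be multiplication by n. For y ∈ K₂, χ ∈ Hom(ker π_n, k^×), and a set-theoretic section σ of K₂ → image π_n, the formulas (α,x,w)·e_{y+z,χ} := αⁿ ⟨x, y+z⟩ χ(w + σ(z) − σ(nw+z)) e_{y+z+nw,χ}, for z ∈ image π_n, define a group action of G on W_{y,χ} = span{e_{y+z,χ} : z ∈ image π_n}, making it an irreducible weight-n G-module. -/

import Mathlib

/-!
`G` acts on `image π_n` by translating `z` by `π_n w`, and the formula is the monomial
representation attached to this action and to the scalar factor
`c(g, z) = αⁿ ⟨x, y z⟩ χ(w σ(z) σ(z π_n w)⁻¹)`: the group law of `G` is exactly the cocycle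
identity `c(gh, z) = c(g, h • z) c(h, z)`. For irreducibility, `K₁ ⊆ G` acts diagonally through
the pairwise distinct characters `y z`; since `|K₁|` is invertible in `k`, averaging against one
of them projects a nonzero invariant subspace onto a basis vector, and the translations move that
basis vector to all the others.
-/

abbrev ThetaK1 (p : ℕ) (d : Fin p → ℕ) : Type := ∀ i : Fin p, Multiplicative (ZMod (d i))

abbrev ThetaK2 (k : Type) [Field k] (p : ℕ) (d : Fin p → ℕ) : Type := ThetaK1 p d →* kˣ

def Heis (k : Type) [Field k] (p : ℕ) (d : Fin p → ℕ) : Type :=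
  kˣ × ThetaK1 p d × ThetaK2 k p d

namespace Heis

variable {k : Type} [Field k] {p : ℕ} {d : Fin p → ℕ}

def mk (α : kˣ) (x : ThetaK1 p d) (χ : ThetaK2 k p d) : Heis k p d := (α, x, χ)

instance : Mul (Heis k p d) :=
  ⟨fun a b => (a.1 * b.1 * b.2.2 a.2.1, a.2.1 * b.2.1, a.2.2 * b.2.2)⟩

instance : One (Heis k p d) := ⟨((1 : kˣ), 1, 1)⟩

instance : Inv (Heis k p d) := ⟨fun a => (a.1⁻¹ * a.2.2 a.2.1, a.2.1⁻¹, a.2.2⁻¹)⟩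

theorem mul_def (a b : Heis k p d) :
    a * b = (a.1 * b.1 * b.2.2 a.2.1, a.2.1 * b.2.1, a.2.2 * b.2.2) := rfl

theorem one_def : (1 : Heis k p d) = ((1 : kˣ), 1, 1) := rfl

theorem inv_def (a : Heis k p d) :
    a⁻¹ = (a.1⁻¹ * a.2.2 a.2.1, a.2.1⁻¹, a.2.2⁻¹) := rfl

theorem mul_assoc' (a b c : Heis k p d) : a * b * c = a * (b * c) := by
  obtain ⟨α, x, χ⟩ := a
  obtain ⟨β, y, ψ⟩ := b
  obtain ⟨γ, z, ω⟩ := c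
  refine Prod.ext ?_ (Prod.ext ?_ ?_)
  · show α * β * ψ x * γ * (ω (x * y)) = α * (β * γ * ω y) * ((ψ * ω) x)
    simp [map_mul, MonoidHom.mul_apply, mul_assoc, mul_comm, mul_left_comm]
  · exact mul_assoc x y z
  · exact mul_assoc χ ψ ω

theorem one_mul' (a : Heis k p d) : 1 * a = a := by
  obtain ⟨α, x, χ⟩ := a
  refine Prod.ext ?_ (Prod.ext ?_ ?_)
  · show 1 * α * χ 1 = α
    simp
  · exact one_mul x
  · exact one_mul χ

theorem mul_one' (a : Heis k p d) : a * 1 = a := by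
  obtain ⟨α, x, χ⟩ := a
  refine Prod.ext ?_ (Prod.ext ?_ ?_)
  · show α * 1 * (1 : ThetaK2 k p d) x = α
    simp
  · exact mul_one x
  · exact mul_one χ

theorem inv_mul_cancel' (a : Heis k p d) : a⁻¹ * a = 1 := by
  obtain ⟨α, x, χ⟩ := a
  refine Prod.ext ?_ (Prod.ext ?_ ?_)
  · show α⁻¹ * χ x * α * χ (x⁻¹) = 1
    simp [map_inv, mul_comm, mul_left_comm]
  · exact inv_mul_cancel x
  · exact inv_mul_cancel χ

instance : Group (Heis k p d) where
  mul_assoc := mul_assoc'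
  one_mul := one_mul'
  mul_one := mul_one'
  inv_mul_cancel := inv_mul_cancel'

/-- The multiplication rule of the Heisenberg-type group. -/
theorem mk_mul (α β : kˣ) (x y : ThetaK1 p d) (χ ψ : ThetaK2 k p d) :
    mk α x χ * mk β y ψ = mk (α * β * ψ x) (x * y) (χ * ψ) := rfl

end Heis

section Reps

variable {k : Type} [Field k]

/-- A subspace stable under a representation. -/
def RepStable {G V : Type} [Group G] [AddCommGroup V] [Module k V]
    (ρ : G →* (V →ₗ[k] V)ˣ) (W : Submodule k V) : Prop :=
  ∀ (g : G), ∀ w ∈ W, (ρ g : V →ₗ[k] V) w ∈ W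

/-- Irreducibility: nonzero and no nontrivial stable subspace. -/
def RepIrred {G V : Type} [Group G] [AddCommGroup V] [Module k V]
    (ρ : G →* (V →ₗ[k] V)ˣ) : Prop :=
  (∃ v : V, v ≠ 0) ∧
  ∀ W : Submodule k V, RepStable ρ W → W = ⊥ ∨ W = ⊤

/-- Isomorphism of representations of `G`. -/
def RepIso {G V W : Type} [Group G] [AddCommGroup V] [Module k V]
    [AddCommGroup W] [Module k W]
    (ρ : G →* (V →ₗ[k] V)ˣ) (τ : G →* (W →ₗ[k] W)ˣ) : Prop :=
  ∃ e : V ≃ₗ[k] W, ∀ (g : G) (v : V), e ((ρ g : V →ₗ[k] V) v) = (τ g : W →ₗ[k] W) (e v)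

variable {p : ℕ} {d : Fin p → ℕ}

/-- A representation of the Heisenberg-type group has weight `n` if `kˣ ⊆ G` acts through the
character `α ↦ αⁿ`. -/
def IsWeight (n : ℤ) {V : Type} [AddCommGroup V] [Module k V]
    (ρ : Heis k p d →* (V →ₗ[k] V)ˣ) : Prop :=
  ∀ (α : kˣ) (v : V), (ρ (Heis.mk α 1 1) : V →ₗ[k] V) v = ((α ^ n : kˣ) : k) • v

/-- `D n = (d₁⋯d_p)/(gcd(n,d₁)⋯gcd(n,d_p))`. -/
def ThetaD (p : ℕ) (d : Fin p → ℕ) (n : ℤ) : ℕ :=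
  (∏ i, d i) / ∏ i, Int.gcd n (d i)

end Reps

section Wn

variable {k : Type} [Field k] {p : ℕ} {d : Fin p → ℕ}

/-- `π_n : K₂ → K₂`, `y ↦ yⁿ`. -/
def piN (n : ℤ) : ThetaK2 k p d →* ThetaK2 k p d where
  toFun y := y ^ n
  map_one' := by
    show (1 : ThetaK2 k p d) ^ n = 1
    exact one_zpow (α := ThetaK2 k p d) n
  map_mul' a b := by
    show (a * b) ^ n = a ^ n * b ^ n
    exact mul_zpow a b n

open scoped Classical in
/-- The standard basis vector `e_{y·z}` (indexed by `z ∈ image π_n`) of the space of functions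
on `image π_n`. -/
noncomputable def eVec (n : ℤ) (z : (piN (k := k) (p := p) (d := d) n).range) :
    ((piN (k := k) (p := p) (d := d) n).range → k) :=
  fun z' => if z' = z then 1 else 0

/-- The element `π_n w` of the image of `π_n`. -/
def rngElt (n : ℤ) (w : ThetaK2 k p d) : (piN (k := k) (p := p) (d := d) n).range :=
  ⟨piN n w, ⟨w, rfl⟩⟩

/-- The element `w · σ(z) · σ(z · π_n w)⁻¹` of `ker π_n`. -/
def kerElt (n : ℤ) (σ : (piN (k := k) (p := p) (d := d) n).range → ThetaK2 k p d)
    (hσ : ∀ z, piN n (σ z) = (z : ThetaK2 k p d))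
    (w : ThetaK2 k p d) (z : (piN (k := k) (p := p) (d := d) n).range) :
    (piN (k := k) (p := p) (d := d) n).ker :=
  ⟨w * σ z * (σ (z * rngElt n w))⁻¹, by
    have hinv : piN n ((σ (z * rngElt n w))⁻¹)
        = ((((z * rngElt n w) : (piN (k := k) (p := p) (d := d) n).range) :
            ThetaK2 k p d))⁻¹ := by
      have h := map_inv (piN (k := k) (p := p) (d := d) n) (σ (z * rngElt n w))
      rw [hσ (z * rngElt n w)] at h
      exact h
    rw [MonoidHom.mem_ker, map_mul, map_mul, hσ z, hinv]
    have hcoe : (((z * rngElt n w) : (piN (k := k) (p := p) (d := d) n).range) :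
        ThetaK2 k p d) = (z : ThetaK2 k p d) * piN n w := by simp [rngElt]
    rw [hcoe]
    exact mul_inv_eq_one.mpr (mul_comm (piN (k := k) (p := p) (d := d) n w) (z : ThetaK2 k p d))⟩

end Wn

section Monomial

variable {k G X : Type} [CommSemiring k] [Group G] [MulAction G X]

theorem cocycle_one {c : G → X → kˣ} (hc : ∀ g h x, c (g * h) x = c g (h • x) * c h x) (x : X) :
    c 1 x = 1 := by
  simpa using hc 1 1 x

noncomputable def monomialRep (c : G → X → kˣ)
    (hc : ∀ g h x, c (g * h) x = c g (h • x) * c h x) : Representation k G (X → k) where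
  toFun g :=
    { toFun := fun f x => (c g (g⁻¹ • x) : k) * f (g⁻¹ • x)
      map_add' := fun f f' => funext fun x => mul_add _ _ _
      map_smul' := fun a f => funext fun x => mul_left_comm _ _ _ }
  map_one' := LinearMap.ext fun f => funext fun x => by simp [cocycle_one hc]
  map_mul' g h := LinearMap.ext fun f => funext fun x => by
    simp [mul_inv_rev, mul_smul, hc, mul_assoc]

variable {c : G → X → kˣ} {hc : ∀ g h x, c (g * h) x = c g (h • x) * c h x}

theorem monomialRep_apply (g : G) (f : X → k) (x : X) :
    monomialRep c hc g f x = c g (g⁻¹ • x) * f (g⁻¹ • x) := rfl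

theorem monomialRep_single [DecidableEq X] (g : G) (x : X) (a : k) :
    monomialRep c hc g (Pi.single x a) = Pi.single (g • x) (c g x * a) := by
  funext x'
  obtain rfl | hx' := eq_or_ne x' (g • x)
  · simp [monomialRep_apply]
  · have : g⁻¹ • x' ≠ x := fun h => hx' (by rw [← h, smul_inv_smul])
    simp [monomialRep_apply, this, hx']

theorem monomialRep_apply_of_forall_smul_eq {g : G} (hg : ∀ x : X, g • x = x) (f : X → k) :
    monomialRep c hc g f = fun x => c g x * f x := by
  funext x
  rw [monomialRep_apply, inv_smul_eq_iff.2 (hg x).symm]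

end Monomial

section MonomialIrreducible

variable {k G X : Type} [Field k] [Group G] [MulAction G X]
  {c : G → X → kˣ} {hc : ∀ g h x, c (g * h) x = c g (h • x) * c h x}

theorem monomialRep_eq_top_of_single_mem [DecidableEq X] [Finite X]
    [MulAction.IsPretransitive G X] {W : Submodule k (X → k)}
    (hW : RepStable (monomialRep c hc).asGroupHom W) {x₀ : X} (hx₀ : Pi.single x₀ 1 ∈ W) :
    W = ⊤ := by
  have hsingle (x : X) : Pi.single x 1 ∈ W := by
    obtain ⟨g, rfl⟩ := MulAction.exists_smul_eq G x₀ x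
    have h := W.smul_mem ((c g x₀)⁻¹ : kˣ) (hW g _ hx₀)
    rwa [Representation.asGroupHom_apply, monomialRep_single, ← Pi.single_smul', smul_eq_mul,
      mul_one, ← Units.val_mul, inv_mul_cancel, Units.val_one] at h
  rw [eq_top_iff, ← (Pi.basisFun k X).span_eq, Submodule.span_le]
  rintro _ ⟨x, rfl⟩
  simpa using hsingle x

end MonomialIrreducible

section Characters

variable {k H X : Type} [Field k] [Group H] [Fintype H]

theorem sum_inv_mul_apply_eq_zero {θ : X → H →* kˣ} (hθ : Function.Injective θ) {x₀ x : X}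
    (hx : x ≠ x₀) : ∑ h, (((θ x₀ h)⁻¹ * θ x h : kˣ) : k) = 0 := by
  refine sum_hom_units_eq_zero ((Units.coeHom k).comp ((θ x₀)⁻¹ * θ x)) fun h => hx (hθ ?_)
  exact (inv_mul_eq_one.1 (MonoidHom.ext fun g => Units.ext (DFunLike.congr_fun h g))).symm

theorem single_mem_of_forall_char_mul_mem [DecidableEq X] {θ : X → H →* kˣ}
    (hθ : Function.Injective θ) (hH : (Fintype.card H : k) ≠ 0) {W : Submodule k (X → k)}
    (hW : ∀ h, ∀ f ∈ W, (fun x => (θ x h : k) * f x) ∈ W) {f : X → k} (hf : f ∈ W) {x₀ : X}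
    (hx₀ : f x₀ ≠ 0) : Pi.single x₀ 1 ∈ W := by
  have hproj : ∑ h, (((θ x₀ h)⁻¹ : kˣ) : k) • (fun x => (θ x h : k) * f x) =
      ((Fintype.card H : k) * f x₀) • Pi.single x₀ 1 := by
    funext x
    obtain rfl | hx := eq_or_ne x x₀
    · simp [Finset.sum_apply]
    · have hsum := sum_inv_mul_apply_eq_zero hθ hx
      push_cast at hsum
      simp [Finset.sum_apply, ← mul_assoc, ← Finset.sum_mul, hsum, hx]
  have hmem := W.smul_mem ((Fintype.card H : k) * f x₀)⁻¹
    (hproj ▸ W.sum_mem fun h _ => W.smul_mem _ (hW h f hf))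
  rwa [smul_smul, inv_mul_cancel₀ (mul_ne_zero hH hx₀), one_smul] at hmem

end Characters

section HeisRep

variable {k : Type} [Field k] {p : ℕ} {d : Fin p → ℕ} {n : ℤ}

theorem rngElt_mul (w w' : ThetaK2 k p d) : rngElt n (w * w') = rngElt n w * rngElt n w' :=
  Subtype.ext (mul_zpow w w' n)

theorem rngElt_one : rngElt (k := k) (p := p) (d := d) n 1 = 1 :=
  Subtype.ext (one_zpow (α := ThetaK2 k p d) n)

def Heis.toRange (n : ℤ) : Heis k p d →* (piN (k := k) (p := p) (d := d) n).range where
  toFun g := rngElt n g.2.2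
  map_one' := rngElt_one
  map_mul' g h := rngElt_mul g.2.2 h.2.2

instance : MulAction (Heis k p d) (piN (k := k) (p := p) (d := d) n).range :=
  MulAction.compHom _ (Heis.toRange n)

theorem Heis.smul_eq (g : Heis k p d) (z : (piN (k := k) (p := p) (d := d) n).range) :
    g • z = z * rngElt n g.2.2 :=
  mul_comm _ _

instance : MulAction.IsPretransitive (Heis k p d) (piN (k := k) (p := p) (d := d) n).range where
  exists_smul_eq z z' := by
    obtain ⟨w, hw⟩ := (z⁻¹ * z').2
    refine ⟨Heis.mk 1 1 w, (Heis.smul_eq _ _).trans ?_⟩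
    change z * rngElt n w = z'
    rw [show rngElt n w = z⁻¹ * z' from Subtype.ext hw, mul_inv_cancel_left]

variable (y : ThetaK2 k p d) (χ : (piN (k := k) (p := p) (d := d) n).ker →* kˣ)
  (σ : (piN (k := k) (p := p) (d := d) n).range → ThetaK2 k p d)
  (hσ : ∀ z, piN n (σ z) = (z : ThetaK2 k p d))

theorem kerElt_one (z : (piN (k := k) (p := p) (d := d) n).range) : kerElt n σ hσ 1 z = 1 :=
  Subtype.ext <| show (1 : ThetaK2 k p d) * σ z * (σ (z * rngElt n 1))⁻¹ = 1 by
    rw [rngElt_one, mul_one]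
    exact mul_inv_eq_one.mpr (one_mul (σ z))

theorem kerElt_mul (w w' : ThetaK2 k p d) (z : (piN (k := k) (p := p) (d := d) n).range) :
    kerElt n σ hσ (w * w') z = kerElt n σ hσ w (z * rngElt n w') * kerElt n σ hσ w' z := by
  have hz : z * rngElt n (w * w') = z * rngElt n w' * rngElt n w := by
    rw [rngElt_mul, mul_comm (rngElt n w), mul_assoc]
  apply Subtype.ext
  show w * w' * σ z * (σ (z * rngElt n (w * w')))⁻¹ =
    w * σ (z * rngElt n w') * (σ (z * rngElt n w' * rngElt n w))⁻¹ *
      (w' * σ z * (σ (z * rngElt n w'))⁻¹)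
  have key {G : Type} [CommGroup G] (w w' a b c : G) :
      w * w' * a * c⁻¹ = w * b * c⁻¹ * (w' * a * b⁻¹) := by
    simp [mul_assoc, mul_comm, mul_left_comm]
  rw [hz]
  exact key w w' _ _ _

def heisCocycle (g : Heis k p d) (z : (piN (k := k) (p := p) (d := d) n).range) : kˣ :=
  g.1 ^ n * (y * z) g.2.1 * χ (kerElt n σ hσ g.2.2 z)

theorem heisCocycle_mul (g h : Heis k p d) (z : (piN (k := k) (p := p) (d := d) n).range) :
    heisCocycle y χ σ hσ (g * h) z =
      heisCocycle y χ σ hσ g (h • z) * heisCocycle y χ σ hσ h z := by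
  rw [Heis.smul_eq]
  obtain ⟨α, x, w⟩ := g
  obtain ⟨β, x', w'⟩ := h
  have hpow : (w' ^ n) x = w' x ^ n := map_zpow (MonoidHom.eval x) w' n
  show (α * β * w' x) ^ n * (y * z) (x * x') * χ (kerElt n σ hσ (w * w') z) =
    α ^ n * (y * (z * w' ^ n)) x * χ (kerElt n σ hσ w (z * rngElt n w')) *
      (β ^ n * (y * z) x' * χ (kerElt n σ hσ w' z))
  rw [kerElt_mul, map_mul, Units.ext_iff]
  push_cast [mul_zpow, MonoidHom.mul_apply, map_mul, hpow]
  ring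

theorem heisCocycle_mk_one (α : kˣ) (x : ThetaK1 p d)
    (z : (piN (k := k) (p := p) (d := d) n).range) :
    heisCocycle y χ σ hσ (Heis.mk α x 1) z = α ^ n * (y * z) x := by
  rw [heisCocycle, show (Heis.mk α x 1).2.2 = 1 from rfl, kerElt_one, map_one, mul_one]
  rfl

noncomputable def heisRep :
    Representation k (Heis k p d) ((piN (k := k) (p := p) (d := d) n).range → k) :=
  monomialRep (heisCocycle y χ σ hσ) (heisCocycle_mul y χ σ hσ)

theorem heisRep_mk_one (α : kˣ) (x : ThetaK1 p d)
    (f : (piN (k := k) (p := p) (d := d) n).range → k) :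
    heisRep y χ σ hσ (Heis.mk α x 1) f = fun z : (piN (k := k) (p := p) (d := d) n).range =>
      ((α ^ n * (y * z) x : kˣ) : k) * f z := by
  have hfix (z : (piN (k := k) (p := p) (d := d) n).range) : Heis.mk α x 1 • z = z := by
    rw [Heis.smul_eq, show (Heis.mk α x 1).2.2 = 1 from rfl, rngElt_one, mul_one]
  unfold heisRep
  rw [monomialRep_apply_of_forall_smul_eq hfix]
  simp only [heisCocycle_mk_one]

theorem eVec_eq_single [DecidableEq (piN (k := k) (p := p) (d := d) n).range]
    (z : (piN (k := k) (p := p) (d := d) n).range) : eVec n z = Pi.single z 1 := by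
  funext z'
  simp [eVec, Pi.single_apply]

theorem heisRep_eVec (α : kˣ) (x : ThetaK1 p d) (w : ThetaK2 k p d)
    (z : (piN (k := k) (p := p) (d := d) n).range) :
    heisRep y χ σ hσ (Heis.mk α x w) (eVec n z) =
      ((α ^ n * (y * z) x * χ (kerElt n σ hσ w z) : kˣ) : k) • eVec n (z * rngElt n w) := by
  classical
  unfold heisRep
  rw [eVec_eq_single, eVec_eq_single, monomialRep_single, Heis.smul_eq, ← Pi.single_smul',
    smul_eq_mul]
  rfl

theorem isWeight_heisRep : IsWeight n (heisRep y χ σ hσ).asGroupHom := by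
  intro α f
  rw [Representation.asGroupHom_apply, heisRep_mk_one]
  funext z
  rw [map_one, mul_one]
  rfl

theorem repIrred_heisRep [∀ i, NeZero (d i)] (hcard : (Fintype.card (ThetaK1 p d) : k) ≠ 0) :
    RepIrred (heisRep y χ σ hσ).asGroupHom := by
  classical
  refine ⟨⟨Pi.single 1 1, by simp⟩, fun W hW => or_iff_not_imp_left.2 fun hW0 => ?_⟩
  obtain ⟨f, hf, hf0⟩ := W.ne_bot_iff.1 hW0
  obtain ⟨z₀, hz₀⟩ := Function.ne_iff.1 hf0
  have hθ : Function.Injective fun z : (piN (k := k) (p := p) (d := d) n).range => y * z :=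
    fun z z' h => Subtype.ext (mul_left_cancel h)
  refine monomialRep_eq_top_of_single_mem hW
    (single_mem_of_forall_char_mul_mem hθ hcard (fun x f hf => ?_) hf hz₀)
  have hx := hW (Heis.mk 1 x 1) f hf
  simpa [Representation.asGroupHom_apply, heisRep_mk_one] using hx

end HeisRep

theorem card_thetaK1 {p : ℕ} {d : Fin p → ℕ} [∀ i, NeZero (d i)] :
    Fintype.card (ThetaK1 p d) = ∏ i, d i := by
  simp [ThetaK1]

theorem card_thetaK1_ne_zero {k : Type} [Field k] {p : ℕ} {d : Fin p → ℕ} [∀ i, NeZero (d i)]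
    (hchar : ∀ i, ¬ ringChar k ∣ d i) : (Fintype.card (ThetaK1 p d) : k) ≠ 0 := by
  rw [card_thetaK1, Nat.cast_prod]
  exact Finset.prod_ne_zero_iff.2 fun i _ => (ringChar.spec k (d i)).not.2 (hchar i)

theorem stmt11_general {k : Type} [Field k] {p : ℕ} {d : Fin p → ℕ}
    (hchar : ∀ i, ¬ (ringChar k ∣ d i))
    (n : ℤ) (y : ThetaK2 k p d)
    (χ : ↥(piN (k := k) (p := p) (d := d) n).ker →* kˣ)
    (σ : ↥(piN (k := k) (p := p) (d := d) n).range → ThetaK2 k p d)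
    (hσ : ∀ z, piN n (σ z) = (z : ThetaK2 k p d)) :
    ∃ ρ : Heis k p d →*
        ((↥(piN (k := k) (p := p) (d := d) n).range → k) →ₗ[k]
          (↥(piN (k := k) (p := p) (d := d) n).range → k))ˣ,
      (∀ (α : kˣ) (x : ThetaK1 p d) (w : ThetaK2 k p d)
          (z : ↥(piN (k := k) (p := p) (d := d) n).range),
        (ρ (Heis.mk α x w) :
            (↥(piN (k := k) (p := p) (d := d) n).range → k) →ₗ[k]
              (↥(piN (k := k) (p := p) (d := d) n).range → k)) (eVec n z) =
          ((α ^ n * (y * (z : ThetaK2 k p d)) x * χ (kerElt n σ hσ w z) : kˣ) : k) •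
            eVec n (z * rngElt n w)) ∧
      IsWeight n ρ ∧ RepIrred ρ := by
  have : ∀ i, NeZero (d i) := fun i => ⟨fun h => hchar i (h ▸ dvd_zero _)⟩
  exact ⟨(heisRep y χ σ hσ).asGroupHom, heisRep_eVec y χ σ hσ, isWeight_heisRep y χ σ hσ,
    repIrred_heisRep y χ σ hσ (card_thetaK1_ne_zero hchar)⟩

/-- Let `π_n : K₂ → K₂` be multiplication by `n` (written multiplicatively:
`y ↦ yⁿ`).  For `y ∈ K₂`, a character `χ` of `ker π_n`, and a normalized set-theoretic section
`σ` of `K₂ ↠ image π_n`, the formulas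
`(α,x,w)·e_{y·z,χ} := αⁿ ⟨x, y·z⟩ χ(w·σ(z)·σ(z·(π_n w))⁻¹) e_{y·z·(π_n w),χ}` (`z ∈ image π_n`)
define an action of the Heisenberg-type group `G` on
`W_{y,χ} = span{e_{y·z,χ} : z ∈ image π_n}`, making it an irreducible weight-`n` `G`-module. -/
theorem stmt11 {k : Type} [Field k] [IsAlgClosed k] {p : ℕ} {d : Fin p → ℕ}
    (hd0 : ∀ i, 0 < d i) (hchain : ∀ i j : Fin p, i ≤ j → d i ∣ d j)
    (hchar : ∀ i, ¬ (ringChar k ∣ d i))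
    (n : ℤ) (y : ThetaK2 k p d)
    (χ : ↥(piN (k := k) (p := p) (d := d) n).ker →* kˣ)
    (σ : ↥(piN (k := k) (p := p) (d := d) n).range → ThetaK2 k p d)
    (hσ : ∀ z, piN n (σ z) = (z : ThetaK2 k p d)) (hσ1 : σ 1 = 1) :
    ∃ ρ : Heis k p d →*
        ((↥(piN (k := k) (p := p) (d := d) n).range → k) →ₗ[k]
          (↥(piN (k := k) (p := p) (d := d) n).range → k))ˣ,
      (∀ (α : kˣ) (x : ThetaK1 p d) (w : ThetaK2 k p d)
          (z : ↥(piN (k := k) (p := p) (d := d) n).range),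
        (ρ (Heis.mk α x w) :
            (↥(piN (k := k) (p := p) (d := d) n).range → k) →ₗ[k]
              (↥(piN (k := k) (p := p) (d := d) n).range → k)) (eVec n z) =
          ((α ^ n * (y * (z : ThetaK2 k p d)) x * χ (kerElt n σ hσ w z) : kˣ) : k) •
            eVec n (z * rngElt n w)) ∧
      IsWeight n ρ ∧ RepIrred ρ :=
  stmt11_general hchar n y χ σ hσ
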